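/- arXiv:1010.5795 — 2 statements merged into one kernel-verified Lean document; each statement's English description precedes it below -/
import Mathlib

section
/- The right cylinder over a logarithmic spiral, parameterized in cylindrical coordinates by F(u, z) = (u cos θ · cos(φ(u)), u cos θ · sin(φ(u)), z) with φ(u) = -tan θ · ln(u) + const, makes constant angle θ with the Killing field V = (-y, x, 0): at every point the unit normal N satisfies ⟨N, V⟩ = ‖V‖ cos θ. -/
open Real Set

/-- Dot product on ℝ³ (as ℝ × ℝ × ℝ). -/
noncomputable def dot3 (a b : ℝ × ℝ × ℝ) : ℝ :=
  a.1 * b.1 + a.2.1 * b.2.1 + a.2.2 * b.2.2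

/-- Cross product on ℝ³ (as ℝ × ℝ × ℝ). -/
noncomputable def cross3 (a b : ℝ × ℝ × ℝ) : ℝ × ℝ × ℝ :=
  (a.2.1 * b.2.2 - a.2.2 * b.2.1,
   a.2.2 * b.1 - a.1 * b.2.2,
   a.1 * b.2.1 - a.2.1 * b.1)

/-- Euclidean norm on ℝ³ (as ℝ × ℝ × ℝ). -/
noncomputable def norm3 (a : ℝ × ℝ × ℝ) : ℝ := Real.sqrt (dot3 a a)

/-!
Since `φ' = -tan θ / u` on the spiral, the tangent `d/du (u cos θ · e^{iφ})` is the unit vector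
`e^{i(φ - θ)}`. The cylinder's unit normal is this tangent turned by a quarter turn, `i e^{i(φ - θ)}`,
while `V = u cos θ · i e^{iφ}`; their inner product is `u cos θ · cos θ = ‖V‖ cos θ`.
-/

section Spiral

variable {θ u : ℝ} {φ : ℝ → ℝ}

theorem hasDerivAt_mul_cos_of_hasDerivAt_neg_tan_div (hcos : cos θ ≠ 0) (hu : u ≠ 0)
    (hφ : HasDerivAt φ (-tan θ / u) u) :
    HasDerivAt (fun t => t * cos θ * cos (φ t)) (cos (φ u - θ)) u := by
  refine (((hasDerivAt_id u).mul_const (cos θ)).mul hφ.cos).congr_deriv ?_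
  rw [cos_sub, tan_eq_sin_div_cos, id]
  field_simp

theorem hasDerivAt_mul_sin_of_hasDerivAt_neg_tan_div (hcos : cos θ ≠ 0) (hu : u ≠ 0)
    (hφ : HasDerivAt φ (-tan θ / u) u) :
    HasDerivAt (fun t => t * cos θ * sin (φ t)) (sin (φ u - θ)) u := by
  refine (((hasDerivAt_id u).mul_const (cos θ)).mul hφ.sin).congr_deriv ?_
  rw [sin_sub, tan_eq_sin_div_cos, id]
  field_simp
  ring

end Spiral

theorem cross3_vertical_horizontal (a b : ℝ) : cross3 (0, 0, 1) (a, b, 0) = (-b, a, 0) := by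
  simp [cross3]

theorem norm3_horizontal (a b : ℝ) : norm3 (a, b, 0) = √(a ^ 2 + b ^ 2) := by
  simp only [norm3, dot3]
  ring_nf

theorem norm3_neg_sin_cos (α : ℝ) : norm3 (-sin α, cos α, 0) = 1 := by
  rw [norm3_horizontal, neg_sq, sin_sq_add_cos_sq, sqrt_one]

theorem norm3_mul_neg_sin_cos (ρ α : ℝ) : norm3 (-(ρ * sin α), ρ * cos α, 0) = |ρ| := by
  rw [norm3_horizontal, neg_sq, mul_pow, mul_pow, ← mul_add, sin_sq_add_cos_sq, mul_one,
    sqrt_sq_eq_abs]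

theorem dot3_neg_sin_cos (ρ α β : ℝ) :
    dot3 (-sin α, cos α, 0) (-(ρ * sin β), ρ * cos β, 0) = ρ * cos (β - α) := by
  simp only [dot3, cos_sub]
  ring

/-- The right cylinder over the logarithmic spiral
`u ↦ (u cos θ, φ₀ - tan θ ln u)` (in polar coordinates) makes constant angle θ
with `V = (-y, x, 0)`: its unit normal satisfies `⟨N, V⟩ = ‖V‖ cos θ`. -/
theorem stmt_12 (θ φ₀ : ℝ) (hθ : θ ∈ Set.Ioo 0 (π / 2))
    (φf : ℝ → ℝ) (hφf : ∀ u, φf u = -Real.tan θ * Real.log u + φ₀)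
    (u z : ℝ) (hu : 0 < u) :
    let r : ℝ → ℝ := fun t => t * Real.cos θ
    let Fu : ℝ × ℝ × ℝ :=
      (deriv (fun t => r t * Real.cos (φf t)) u,
       deriv (fun t => r t * Real.sin (φf t)) u,
       deriv (fun _ : ℝ => z) u)
    let Fz : ℝ × ℝ × ℝ := (0, 0, 1)
    let N : ℝ × ℝ × ℝ := (norm3 (cross3 Fz Fu))⁻¹ • cross3 Fz Fu
    let V : ℝ × ℝ × ℝ := (-(r u * Real.sin (φf u)), r u * Real.cos (φf u), 0)
    dot3 N V = norm3 V * Real.cos θ := by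
  intro r Fu Fz N V
  have hcos : 0 < cos θ := cos_pos_of_mem_Ioo ⟨by linarith [hθ.1, pi_pos], hθ.2⟩
  have hφ : HasDerivAt φf (-tan θ / u) u := by
    rw [funext hφf, div_eq_mul_inv]
    exact ((hasDerivAt_log hu.ne').const_mul _).add_const φ₀
  have hFu : Fu = (cos (φf u - θ), sin (φf u - θ), 0) := by
    simp only [Fu, r, deriv_const]
    rw [(hasDerivAt_mul_cos_of_hasDerivAt_neg_tan_div hcos.ne' hu.ne' hφ).deriv,
      (hasDerivAt_mul_sin_of_hasDerivAt_neg_tan_div hcos.ne' hu.ne' hφ).deriv]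
  have hN : N = (-sin (φf u - θ), cos (φf u - θ), 0) := by
    simp only [N, Fz, hFu, cross3_vertical_horizontal, norm3_neg_sin_cos, inv_one, one_smul]
  have hV : norm3 V = u * cos θ := by
    rw [norm3_mul_neg_sin_cos, abs_of_pos (mul_pos hu hcos)]
  rw [hN, hV, dot3_neg_sin_cos, sub_sub_cancel]
end

section
/- For Dini's surface F(u,v) with r = (cos θ/c) sin(cu), φ = -(cv₀ tan θ)/cos θ - tan θ ln(tan(cu/2)), z = v₀ - (cos θ/c)cos(cu), the u-parameter curves (v = v₀ fixed) are unit-speed spherical curves lying on the sphere of radius cos θ/c centered at (0, 0, v₀). -/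
/-!
In cylindrical coordinates `r² + (z - v₀)² = (cos θ / c)² (sin² (cu) + cos² (cu))`, which gives the
sphere. The squared speed of `(r cos φ, r sin φ, z)` is `r'² + (r φ')² + z'²`. Here
`r' = cos θ cos (cu)` and `z' = cos θ sin (cu)`, and since `(log tan (x/2))' = 1 / sin x` the
factor `sin (cu)` in `r` cancels against `φ'`, leaving `r φ' = -sin θ`. The squared speed is
therefore `cos² θ + sin² θ = 1`.
-/

open Real

theorem Real.hasDerivAt_log_tan_half {x : ℝ} (hx : sin x ≠ 0) :
    HasDerivAt (fun y => log (tan (y / 2))) (1 / sin x) x := by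
  have hsin_two_mul : sin x = 2 * sin (x / 2) * cos (x / 2) := by
    rw [← sin_two_mul, mul_div_cancel₀ x two_ne_zero]
  have hsin : sin (x / 2) ≠ 0 := fun h => hx (by rw [hsin_two_mul, h]; ring)
  have hcos : cos (x / 2) ≠ 0 := fun h => hx (by rw [hsin_two_mul, h]; ring)
  have htan : HasDerivAt (fun y => tan (y / 2)) (1 / cos (x / 2) ^ 2 * (1 / 2)) x :=
    HasDerivAt.comp x (hasDerivAt_tan hcos) ((hasDerivAt_id' x).div_const 2)
  refine (htan.log (by rw [tan_eq_sin_div_cos]; exact div_ne_zero hsin hcos)).congr_deriv ?_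
  rw [tan_eq_sin_div_cos, hsin_two_mul]
  field_simp

theorem deriv_mul_cos_sq_add_deriv_mul_sin_sq {r φ : ℝ → ℝ} {r' φ' u : ℝ}
    (hr : HasDerivAt r r' u) (hφ : HasDerivAt φ φ' u) :
    deriv (fun t => r t * cos (φ t)) u ^ 2 + deriv (fun t => r t * sin (φ t)) u ^ 2
      = r' ^ 2 + (r u * φ') ^ 2 := by
  have hX : HasDerivAt (fun t => r t * cos (φ t)) (r' * cos (φ u) + r u * (-sin (φ u) * φ')) u :=
    hr.mul hφ.cos
  have hY : HasDerivAt (fun t => r t * sin (φ t)) (r' * sin (φ u) + r u * (cos (φ u) * φ')) u :=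
    hr.mul hφ.sin
  rw [hX.deriv, hY.deriv]
  linear_combination (r' ^ 2 + (r u * φ') ^ 2) * sin_sq_add_cos_sq (φ u)

theorem stmt_15_general (θ c v₀ : ℝ) (hθ : θ ∈ Set.Ioo 0 (π / 2)) (hc : 0 < c)
    (u : ℝ) (h1 : 0 < Real.sin (c * u)) :
    let r : ℝ → ℝ := fun u => Real.cos θ / c * Real.sin (c * u)
    let φ : ℝ → ℝ := fun u =>
      -(c * v₀ * Real.tan θ) / Real.cos θ
        - Real.tan θ * Real.log (Real.tan (c * u / 2))
    let z : ℝ → ℝ := fun u => v₀ - Real.cos θ / c * Real.cos (c * u)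
    let X : ℝ → ℝ := fun u => r u * Real.cos (φ u)
    let Y : ℝ → ℝ := fun u => r u * Real.sin (φ u)
    (X u ^ 2 + Y u ^ 2 + (z u - v₀) ^ 2 = (Real.cos θ / c) ^ 2) ∧
      ((deriv X u) ^ 2 + (deriv Y u) ^ 2 + (deriv z u) ^ 2 = 1) := by
  intro r φ z X Y
  have hcosθ : cos θ ≠ 0 := (cos_pos_of_mem_Ioo ⟨by linarith [hθ.1, pi_pos], hθ.2⟩).ne'
  have hcu : HasDerivAt (fun t => c * t) c u := hasDerivAt_const_mul c
  have hr : HasDerivAt r (cos θ * cos (c * u)) u :=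
    (hcu.sin.const_mul (cos θ / c)).congr_deriv (by field_simp)
  have hz : HasDerivAt z (cos θ * sin (c * u)) u :=
    ((hcu.cos.const_mul (cos θ / c)).const_sub v₀).congr_deriv (by field_simp)
  have hφ : HasDerivAt φ (-(tan θ * (1 / sin (c * u) * c))) u :=
    (((hasDerivAt_log_tan_half h1.ne').comp u hcu).const_mul (tan θ)).const_sub _
  have hrφ : r u * -(tan θ * (1 / sin (c * u) * c)) = -sin θ := by
    simp only [r, tan_eq_sin_div_cos]
    field_simp
  constructor
  · linear_combination (cos θ / c * sin (c * u)) ^ 2 * sin_sq_add_cos_sq (φ u)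
      + (cos θ / c) ^ 2 * sin_sq_add_cos_sq (c * u)
  · rw [deriv_mul_cos_sq_add_deriv_mul_sin_sq hr hφ, hrφ, hz.deriv]
    linear_combination cos θ ^ 2 * sin_sq_add_cos_sq (c * u) + sin_sq_add_cos_sq θ

/-- The u-parameter curves of Dini's surface are unit-speed spherical curves
lying on the sphere of radius `cos θ/c` centered at `(0, 0, v₀)`. -/
theorem stmt_15 (θ c v₀ : ℝ) (hθ : θ ∈ Set.Ioo 0 (π / 2)) (hc : 0 < c)
    (u : ℝ) (h1 : 0 < Real.sin (c * u)) (h2 : 0 < Real.tan (c * u / 2)) :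
    let r : ℝ → ℝ := fun u => Real.cos θ / c * Real.sin (c * u)
    let φ : ℝ → ℝ := fun u =>
      -(c * v₀ * Real.tan θ) / Real.cos θ
        - Real.tan θ * Real.log (Real.tan (c * u / 2))
    let z : ℝ → ℝ := fun u => v₀ - Real.cos θ / c * Real.cos (c * u)
    let X : ℝ → ℝ := fun u => r u * Real.cos (φ u)
    let Y : ℝ → ℝ := fun u => r u * Real.sin (φ u)
    (X u ^ 2 + Y u ^ 2 + (z u - v₀) ^ 2 = (Real.cos θ / c) ^ 2) ∧
      ((deriv X u) ^ 2 + (deriv Y u) ^ 2 + (deriv z u) ^ 2 = 1) :=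
  stmt_15_general θ c v₀ hθ hc u h1
end
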